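/- arXiv:1210.1433 — 7 statements merged into one kernel-verified Lean document; each statement's English description precedes it below -/
import Mathlib

section
/- Let A and B be preorders and (dB, E, dA) a two-sided discrete fibration from A to B. Define R : B → A → Prop by R b a ↔ ∃ e ∈ E, dB e = b ∧ dA e = a. Then R is a monotone relation from A to B, and R equals the composite (dB)_⋄·(dA)^⋄; concretely, for all a ∈ A, b ∈ B: (∃ e ∈ E, dB e = b ∧ dA e = a) ↔ (∃ e ∈ E, b ≤ dB e ∧ dA e ≤ a). -/
/-! Given `e` with `b ≤ dB e` and `dA e ≤ a`, restricting `e` along `b ≤ dB e` and then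
extending the result along `dA e ≤ a` yields an element lying exactly over `(b, a)`.
Both the monotonicity of the relation and the inclusion `(dB)_⋄ · (dA)^⋄ ≤ R` are instances
of this transport. -/

/-- `(dB, E, dA)` is a two-sided discrete fibration from the preorder `A` to
the preorder `B`. -/
def IsTwoSidedDiscreteFibration {E A B : Type*} [Preorder E] [Preorder A] [Preorder B]
    (dB : E → B) (dA : E → A) : Prop :=
  Monotone dB ∧ Monotone dA ∧
  (∀ (e : E) (b : B), b ≤ dB e → ∃! e' : E, dB e' = b ∧ dA e' = dA e ∧ e' ≤ e) ∧
  (∀ (e : E) (a : A), dA e ≤ a → ∃! e'' : E, dA e'' = a ∧ dB e'' = dB e ∧ e ≤ e'') ∧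
  (∀ e e' : E, e ≤ e' → ∃ m : E, dB m = dB e ∧ dA m = dA e' ∧ e ≤ m ∧ m ≤ e')

namespace IsTwoSidedDiscreteFibration

variable {E A B : Type*} [Preorder E] [Preorder A] [Preorder B] {dB : E → B} {dA : E → A}

theorem exists_dB_eq_of_le (h : IsTwoSidedDiscreteFibration dB dA) {e : E} {b : B}
    (hb : b ≤ dB e) : ∃ e' : E, dB e' = b ∧ dA e' = dA e :=
  let ⟨e', ⟨hb', ha', _⟩, _⟩ := h.2.2.1 e b hb
  ⟨e', hb', ha'⟩

theorem exists_dA_eq_of_le (h : IsTwoSidedDiscreteFibration dB dA) {e : E} {a : A}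
    (ha : dA e ≤ a) : ∃ e' : E, dB e' = dB e ∧ dA e' = a :=
  let ⟨e', ⟨ha', hb', _⟩, _⟩ := h.2.2.2.1 e a ha
  ⟨e', hb', ha'⟩

theorem exists_eq_of_le_of_le (h : IsTwoSidedDiscreteFibration dB dA) {e : E} {b : B} {a : A}
    (hb : b ≤ dB e) (ha : dA e ≤ a) : ∃ e' : E, dB e' = b ∧ dA e' = a := by
  obtain ⟨e₁, hb₁, ha₁⟩ := h.exists_dB_eq_of_le hb
  obtain ⟨e₂, hb₂, ha₂⟩ := h.exists_dA_eq_of_le (ha₁.trans_le ha)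
  exact ⟨e₂, hb₂.trans hb₁, ha₂⟩

end IsTwoSidedDiscreteFibration

/-- The relation associated to a two-sided discrete fibration `(dB, E, dA)` is a
monotone relation from `A` to `B` and equals the composite `(dB)_⋄ · (dA)^⋄`. -/
theorem fibration_to_relation {E A B : Type*} [Preorder E] [Preorder A] [Preorder B]
    (dB : E → B) (dA : E → A)
    (h : IsTwoSidedDiscreteFibration dB dA) :
    (∀ b a, (∃ e : E, dB e = b ∧ dA e = a) →
      ∀ b' : B, b' ≤ b → ∀ a' : A, a ≤ a' → ∃ e : E, dB e = b' ∧ dA e = a') ∧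
    (∀ (a : A) (b : B),
      (∃ e : E, dB e = b ∧ dA e = a) ↔ (∃ e : E, b ≤ dB e ∧ dA e ≤ a)) := by
  refine ⟨?_, fun a b => ⟨?_, ?_⟩⟩
  · rintro b a ⟨e, rfl, rfl⟩ b' hb a' ha
    exact h.exists_eq_of_le_of_le hb ha
  · rintro ⟨e, rfl, rfl⟩
    exact ⟨e, le_rfl, le_rfl⟩
  · rintro ⟨e, hb, ha⟩
    exact h.exists_eq_of_le_of_le hb ha
end

section
/- (Pullbacks of fibrations are exact.) Let A, B, C be preorders, (dC, E, dB) a two-sided discrete fibration from B to C, and (dB', F, dA) a two-sided discrete fibration from A to B. Let G = {(e, f) ∈ E × F | dB e = dB' f} with the componentwise order and projections q0 : G → E, q1 : G → F. Then the commutative square (q0, q1, dB, dB'), regarded as a lax square with identity comparison, is exact: for all e ∈ E and f ∈ F, dB e ≤ dB' f ↔ ∃ (e', f') ∈ G with e ≤ e' and f' ≤ f. -/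
namespace IsTwoSidedDiscreteFibration

variable {E A B : Type*} [Preorder E] [Preorder A] [Preorder B] {dB : E → B} {dA : E → A}

theorem monotone_src (h : IsTwoSidedDiscreteFibration dB dA) : Monotone dA :=
  h.2.1

theorem monotone_tgt (h : IsTwoSidedDiscreteFibration dB dA) : Monotone dB :=
  h.1

theorem exists_le_of_src_le (h : IsTwoSidedDiscreteFibration dB dA) {e : E} {a : A}
    (ha : dA e ≤ a) : ∃ e', e ≤ e' ∧ dA e' = a :=
  let ⟨e', ⟨he'a, _, hee'⟩, _⟩ := h.2.2.2.1 e a ha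
  ⟨e', hee', he'a⟩

end IsTwoSidedDiscreteFibration

/-- The lift of `p e ≤ q f` to `e ≤ e'` puts `(e', f)` in the pullback. -/
theorem pullback_exact_of_exists_lift {E F B : Type*} [Preorder E] [Preorder F] [Preorder B]
    {p : E → B} {q : F → B} (hp : Monotone p) (hq : Monotone q)
    (hlift : ∀ (e : E) (b : B), p e ≤ b → ∃ e', e ≤ e' ∧ p e' = b) (e : E) (f : F) :
    p e ≤ q f ↔ ∃ g : {x : E × F // p x.1 = q x.2}, e ≤ g.val.1 ∧ g.val.2 ≤ f := by
  constructor
  · intro hef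
    obtain ⟨e', hee', he'f⟩ := hlift e (q f) hef
    exact ⟨⟨(e', f), he'f⟩, hee', le_rfl⟩
  · rintro ⟨⟨⟨e', f'⟩, hg⟩, hee', hf'f⟩
    calc p e ≤ p e' := hp hee'
      _ = q f' := hg
      _ ≤ q f := hq hf'f

/-- (Pullbacks of fibrations are exact.)  Given a two-sided discrete fibration
`(dC, E, dB)` from `B` to `C` and a two-sided discrete fibration `(dB', F, dA)`
from `A` to `B`, the pullback square of `dB` along `dB'`, regarded as a lax
square with identity comparison, is exact. -/
theorem pullback_of_fibrations_exact {E F A B C : Type*}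
    [Preorder E] [Preorder F] [Preorder A] [Preorder B] [Preorder C]
    (dC : E → C) (dB : E → B) (dB' : F → B) (dA : F → A)
    (hE : IsTwoSidedDiscreteFibration dC dB)
    (hF : IsTwoSidedDiscreteFibration dB' dA) :
    ∀ (e : E) (f : F),
      dB e ≤ dB' f ↔
        ∃ g : {p : E × F // dB p.1 = dB' p.2}, e ≤ g.val.1 ∧ g.val.2 ≤ f :=
  pullback_exact_of_exists_lift hE.monotone_src hF.monotone_tgt
    fun _ _ ↦ hE.exists_le_of_src_le
end

section
/- (Exact squares give absolute left Kan extensions.) Let A, B, X be preorders and j : A → B, h : A → X, l : B → X monotone maps such that h a ≤ l (j a) for all a ∈ A, and suppose the corresponding lax square is exact: for all x ∈ X and b ∈ B, x ≤ l b ↔ ∃ a ∈ A, x ≤ h a ∧ j a ≤ b. Then l is an absolute left Kan extension of h along j: for every preorder X', every monotone m : X → X' and every monotone k : B → X', one has (∀ b ∈ B, m (l b) ≤ k b) if and only if (∀ a ∈ A, m (h a) ≤ k (j a)). In particular (taking m = id), for every monotone k : B → X, (∀ b, l b ≤ k b) ↔ (∀ a, h a ≤ k (j a)). -/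
section LaxSquare

variable {A B X X' : Type*} [Preorder B] [Preorder X] [Preorder X']
  {j : A → B} {h : A → X} {l : B → X}

theorem forall_map_le_iff_of_lax_of_cover (lax : ∀ a, h a ≤ l (j a))
    (cover : ∀ b, ∃ a, l b ≤ h a ∧ j a ≤ b) {m : X → X'} {k : B → X'}
    (hm : Monotone m) (hk : Monotone k) :
    (∀ b, m (l b) ≤ k b) ↔ ∀ a, m (h a) ≤ k (j a) := by
  refine ⟨fun H a => (hm (lax a)).trans (H (j a)), fun H b => ?_⟩
  obtain ⟨a, hla, hjb⟩ := cover b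
  calc m (l b) ≤ m (h a) := hm hla
    _ ≤ k (j a) := H a
    _ ≤ k b := hk hjb

end LaxSquare

theorem exact_gives_absolute_kan_general {A B X : Type*} [Preorder B] [Preorder X]
    (j : A → B) (h : A → X) (l : B → X)
    (lax : ∀ a : A, h a ≤ l (j a))
    (exact : ∀ (x : X) (b : B), x ≤ l b ↔ ∃ a : A, x ≤ h a ∧ j a ≤ b) :
    (∀ (X' : Type*) [Preorder X'] (m : X → X') (k : B → X'),
        Monotone m → Monotone k →
        ((∀ b : B, m (l b) ≤ k b) ↔ ∀ a : A, m (h a) ≤ k (j a))) ∧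
    (∀ k : B → X, Monotone k →
        ((∀ b : B, l b ≤ k b) ↔ ∀ a : A, h a ≤ k (j a))) := by
  have cover : ∀ b, ∃ a, l b ≤ h a ∧ j a ≤ b := fun b => (exact (l b) b).mp le_rfl
  exact ⟨fun _ _ _ _ hm hk => forall_map_le_iff_of_lax_of_cover lax cover hm hk,
    fun _ hk => forall_map_le_iff_of_lax_of_cover lax cover monotone_id hk⟩

/-- (Exact squares give absolute left Kan extensions.)  If the lax square with
`p0 = id`, `p1 = j`, bottom `h` and right leg `l` is exact, then `l` is an
absolute left Kan extension of `h` along `j`. -/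
theorem exact_gives_absolute_kan {A B X : Type*} [Preorder A] [Preorder B] [Preorder X]
    (j : A → B) (h : A → X) (l : B → X)
    (hj : Monotone j) (hh : Monotone h) (hl : Monotone l)
    (lax : ∀ a : A, h a ≤ l (j a))
    (exact : ∀ (x : X) (b : B), x ≤ l b ↔ ∃ a : A, x ≤ h a ∧ j a ≤ b) :
    (∀ (X' : Type*) [Preorder X'] (m : X → X') (k : B → X'),
        Monotone m → Monotone k →
        ((∀ b : B, m (l b) ≤ k b) ↔ ∀ a : A, m (h a) ≤ k (j a))) ∧
    (∀ k : B → X, Monotone k →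
        ((∀ b : B, l b ≤ k b) ↔ ∀ a : A, h a ≤ k (j a))) :=
  exact_gives_absolute_kan_general j h l lax exact
end

section
/- Let P, A, B, C be partial orders and p0 : P → A, p1 : P → B, f : A → C, g : B → C monotone maps with f (p0 w) ≤ g (p1 w) for all w ∈ P. Suppose f and p1 are left adjoints, i.e., there are monotone maps f^r : C → A and p1^r : B → P with Galois connections f ⊣ f^r and p1 ⊣ p1^r. Then the lax square (p0, p1, f, g) is exact if and only if p0 ∘ p1^r = f^r ∘ g. -/
/-! Both sides of `f a ≤ g b ↔ ∃ w, a ≤ p0 w ∧ p1 w ≤ b` are representable in `a`: the adjunction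
`f ⊣ fr` turns the left side into `a ≤ fr (g b)`, and `p1 ⊣ p1r` turns the right side into
`a ≤ p0 (p1r b)`, since `p1r b` is the largest `w` with `p1 w ≤ b`. In a partial order two elements
with the same lower set are equal, so exactness says exactly that `fr ∘ g = p0 ∘ p1r`. -/

theorem GaloisConnection.exists_le_and_le_iff {P A B : Type*} [Preorder P] [Preorder A]
    [Preorder B] {p0 : P → A} {p1 : P → B} {p1r : B → P} (hp0 : Monotone p0)
    (gc : GaloisConnection p1 p1r) (a : A) (b : B) :
    (∃ w : P, a ≤ p0 w ∧ p1 w ≤ b) ↔ a ≤ p0 (p1r b) :=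
  ⟨fun ⟨_, ha, hb⟩ => ha.trans (hp0 (gc.le_u hb)), fun ha => ⟨p1r b, ha, gc.l_u_le b⟩⟩

theorem exact_iff_mate_equality_general {P A B C : Type*}
    [PartialOrder P] [PartialOrder A] [PartialOrder B] [PartialOrder C]
    (p0 : P → A) (p1 : P → B) (f : A → C) (g : B → C)
    (hp0 : Monotone p0)
    (fr : C → A) (p1r : B → P)
    (gcf : ∀ (a : A) (c : C), f a ≤ c ↔ a ≤ fr c)
    (gcp : ∀ (w : P) (b : B), p1 w ≤ b ↔ w ≤ p1r b) :
    (∀ (a : A) (b : B), f a ≤ g b ↔ ∃ w : P, a ≤ p0 w ∧ p1 w ≤ b) ↔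
    p0 ∘ p1r = fr ∘ g := by
  simp only [gcf, GaloisConnection.exists_le_and_le_iff hp0 gcp, funext_iff,
    Function.comp_apply]
  rw [forall_comm]
  exact forall_congr' fun b => ⟨fun h => (eq_of_forall_le_iff h).symm, fun h a => by rw [h]⟩

/-- A lax square of partial orders in which `f` and `p1` are left adjoints
(with right adjoints `fr` and `p1r`) is exact iff `p0 ∘ p1r = fr ∘ g`. -/
theorem exact_iff_mate_equality {P A B C : Type*}
    [PartialOrder P] [PartialOrder A] [PartialOrder B] [PartialOrder C]
    (p0 : P → A) (p1 : P → B) (f : A → C) (g : B → C)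
    (hp0 : Monotone p0) (hp1 : Monotone p1) (hf : Monotone f) (hg : Monotone g)
    (lax : ∀ w : P, f (p0 w) ≤ g (p1 w))
    (fr : C → A) (p1r : B → P)
    (hfr : Monotone fr) (hp1r : Monotone p1r)
    (gcf : ∀ (a : A) (c : C), f a ≤ c ↔ a ≤ fr c)
    (gcp : ∀ (w : P) (b : B), p1 w ≤ b ↔ w ≤ p1r b) :
    (∀ (a : A) (b : B), f a ≤ g b ↔ ∃ w : P, a ≤ p0 w ∧ p1 w ≤ b) ↔
    p0 ∘ p1r = fr ∘ g :=
  exact_iff_mate_equality_general p0 p1 f g hp0 fr p1r gcf gcp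
end

section
/- Let T : Preord ⥤ Preord be a locally monotone functor. Then the following are equivalent: (1) T preserves exact lax squares (for every exact lax square, its image under T is an exact lax square); (2) T preserves strict exact squares (exact lax squares in which f ∘ p0 = g ∘ p1) and, for every preorder A, T sends the comma square of the identity on A — the square with vertex P = {(a, a') ∈ A × A | a ≤ a'} with componentwise order, the two projections P → A, and both legs id_A — to an exact lax square. (Likewise these are equivalent to: T preserves strict exact squares and exactness of all comma squares f/1 and 1/f, and to: T preserves strict exact squares and exactness of all comma squares.) -/
open CategoryTheory

/-- Exactness of a (lax) square of preorders, given by bundled monotone maps. -/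
def IsExactSq {P A B C : Preord} (p0 : P ⟶ A) (p1 : P ⟶ B) (f : A ⟶ C) (g : B ⟶ C) : Prop :=
  ∀ (a : ↥A) (b : ↥B), f.hom.toFun a ≤ g.hom.toFun b ↔ ∃ w : ↥P, a ≤ p0.hom.toFun w ∧ p1.hom.toFun w ≤ b

/-- A functor `T : Preord ⥤ Preord` is locally monotone. -/
def LocallyMonotone (T : Preord ⥤ Preord) : Prop :=
  ∀ (X Y : Preord) (f g : X ⟶ Y), (∀ x : ↥X, f.hom.toFun x ≤ g.hom.toFun x) →
    ∀ ξ : ↥(T.obj X), (T.map f).hom.toFun ξ ≤ (T.map g).hom.toFun ξ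

/-- The vertex of the comma square `f/g`: pairs `(a, b)` with `f a ≤ g b`,
ordered componentwise. -/
def commaObj {A B C : Preord} (f : A ⟶ C) (g : B ⟶ C) : Preord :=
  Preord.of {p : ↥A × ↥B // f.hom.toFun p.1 ≤ g.hom.toFun p.2}

/-- First projection of the comma square `f/g`. -/
def commaFst {A B C : Preord} (f : A ⟶ C) (g : B ⟶ C) : commaObj f g ⟶ A :=
  Preord.ofHom ((⟨Prod.fst, fun _ _ h => h.1⟩ : OrderHom (↥A × ↥B) ↥A).comp
    (⟨Subtype.val, fun _ _ h => h⟩ :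
      OrderHom {p : ↥A × ↥B // f.hom.toFun p.1 ≤ g.hom.toFun p.2} (↥A × ↥B)))

/-- Second projection of the comma square `f/g`. -/
def commaSnd {A B C : Preord} (f : A ⟶ C) (g : B ⟶ C) : commaObj f g ⟶ B :=
  Preord.ofHom ((⟨Prod.snd, fun _ _ h => h.2⟩ : OrderHom (↥A × ↥B) ↥B).comp
    (⟨Subtype.val, fun _ _ h => h⟩ :
      OrderHom {p : ↥A × ↥B // f.hom.toFun p.1 ≤ g.hom.toFun p.2} (↥A × ↥B)))

/-- `T` preserves exact lax squares. -/
def PreservesExactLaxSquares (T : Preord ⥤ Preord) : Prop :=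
  ∀ (P A B C : Preord) (p0 : P ⟶ A) (p1 : P ⟶ B) (f : A ⟶ C) (g : B ⟶ C),
    (∀ w : ↥P, f.hom.toFun (p0.hom.toFun w) ≤ g.hom.toFun (p1.hom.toFun w)) →
    IsExactSq p0 p1 f g →
    IsExactSq (T.map p0) (T.map p1) (T.map f) (T.map g)

/-- `T` preserves strict exact squares (exact lax squares with commuting
underlying square). -/
def PreservesStrictExactSquares (T : Preord ⥤ Preord) : Prop :=
  ∀ (P A B C : Preord) (p0 : P ⟶ A) (p1 : P ⟶ B) (f : A ⟶ C) (g : B ⟶ C),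
    (∀ w : ↥P, f.hom.toFun (p0.hom.toFun w) = g.hom.toFun (p1.hom.toFun w)) →
    IsExactSq p0 p1 f g →
    IsExactSq (T.map p0) (T.map p1) (T.map f) (T.map g)

/-- `T` sends the comma square of `f : A ⟶ C` and `g : B ⟶ C` to an exact
square. -/
def PreservesCommaSquare (T : Preord ⥤ Preord) {A B C : Preord}
    (f : A ⟶ C) (g : B ⟶ C) : Prop :=
  IsExactSq (T.map (commaFst f g)) (T.map (commaSnd f g)) (T.map f) (T.map g)

/-!
Exactness of a lax square says that the relation `f a ≤ g b` factors through its vertex; the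
reverse implication survives any locally monotone functor, so only the forward one is at stake.
Exact squares paste, and a comma square `f/g` is the pasting of the strict exact square
`(a, b) ↦ (f a, b)` from `f/g` to `1/g` with `1/g`, which in turn is the pasting of the strict
exact square `(c, b) ↦ (c, g b)` from `1/g` to `1/1` with `1/1`; so preserving `1/1` already
gives all comma squares. Conversely, an exact lax square `(p₀, p₁, f, g)` is covered by the
preorder of pairs `(q, w)` of a point `q` of `f/g` and a witness `w` of its exactness; its
projection onto `f/g` is essentially surjective, a property expressed by a strict exact square
and hence preserved by `T`, and local monotonicity moves the witnesses along the two 2-cells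
into the image of the vertex.
-/

section Squares

variable {P A B C : Preord}

theorem isExactSq_of_lax {p0 : P ⟶ A} {p1 : P ⟶ B} {f : A ⟶ C} {g : B ⟶ C}
    (hlax : ∀ w : ↥P, f.hom.toFun (p0.hom.toFun w) ≤ g.hom.toFun (p1.hom.toFun w))
    (h : ∀ a b, f.hom.toFun a ≤ g.hom.toFun b →
      ∃ w : ↥P, a ≤ p0.hom.toFun w ∧ p1.hom.toFun w ≤ b) :
    IsExactSq p0 p1 f g := fun a b =>
  ⟨h a b, fun ⟨w, haw, hwb⟩ =>
    (f.hom.monotone haw).trans ((hlax w).trans (g.hom.monotone hwb))⟩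

theorem IsExactSq.paste_snd {D C' : Preord} {p0 : P ⟶ A} {q : P ⟶ D} {f : A ⟶ C} {u : D ⟶ C}
    {r : D ⟶ B} {e : C ⟶ C'} {g : B ⟶ C'}
    (h₁ : IsExactSq p0 q f u) (h₂ : IsExactSq u r e g) :
    IsExactSq p0 (q ≫ r) (f ≫ e) g := by
  intro a b
  change e.hom.toFun (f.hom.toFun a) ≤ _ ↔ _
  rw [h₂]
  constructor
  · rintro ⟨d, had, hdb⟩
    obtain ⟨w, haw, hwd⟩ := (h₁ a d).1 had
    exact ⟨w, haw, (r.hom.monotone hwd).trans hdb⟩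
  · rintro ⟨w, haw, hwb⟩
    exact ⟨q.hom.toFun w, (h₁ a _).2 ⟨w, haw, le_rfl⟩, hwb⟩

theorem IsExactSq.paste_fst {D C' : Preord} {q : P ⟶ D} {p1 : P ⟶ B} {u : D ⟶ C} {g : B ⟶ C}
    {r : D ⟶ A} {e : A ⟶ C'} {h : C ⟶ C'}
    (h₁ : IsExactSq q p1 u g) (h₂ : IsExactSq r u e h) :
    IsExactSq (q ≫ r) p1 e (g ≫ h) := by
  intro a b
  change _ ≤ h.hom.toFun (g.hom.toFun b) ↔ _
  rw [h₂]
  constructor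
  · rintro ⟨d, had, hdb⟩
    obtain ⟨w, hdw, hwb⟩ := (h₁ d b).1 hdb
    exact ⟨w, had.trans (r.hom.monotone hdw), hwb⟩
  · rintro ⟨w, haw, hwb⟩
    exact ⟨q.hom.toFun w, haw, (h₁ _ b).2 ⟨w, le_rfl, hwb⟩⟩

theorem isExactSq_comma (f : A ⟶ C) (g : B ⟶ C) :
    IsExactSq (commaFst f g) (commaSnd f g) f g :=
  isExactSq_of_lax (fun w => w.property) fun a b h => ⟨⟨(a, b), h⟩, le_rfl, le_rfl⟩

end Squares

section CommaMaps

variable {A B C : Preord}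

def commaMapLeft (f : A ⟶ C) (g : B ⟶ C) : commaObj f g ⟶ commaObj (𝟙 C) g :=
  Preord.ofHom
    ⟨fun q => ⟨(f.hom.toFun q.val.1, q.val.2), q.property⟩,
      fun _ _ h => ⟨f.hom.monotone h.1, h.2⟩⟩

def commaMapRight (g : B ⟶ C) : commaObj (𝟙 C) g ⟶ commaObj (𝟙 C) (𝟙 C) :=
  Preord.ofHom
    ⟨fun q => ⟨(q.val.1, g.hom.toFun q.val.2), q.property⟩,
      fun _ _ h => ⟨h.1, g.hom.monotone h.2⟩⟩

theorem commaMapLeft_comp_commaSnd (f : A ⟶ C) (g : B ⟶ C) :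
    commaMapLeft f g ≫ commaSnd (𝟙 C) g = commaSnd f g := rfl

theorem commaMapRight_comp_commaFst (g : B ⟶ C) :
    commaMapRight g ≫ commaFst (𝟙 C) (𝟙 C) = commaFst (𝟙 C) g := rfl

theorem isExactSq_commaMapLeft (f : A ⟶ C) (g : B ⟶ C) :
    IsExactSq (commaFst f g) (commaMapLeft f g) f (commaFst (𝟙 C) g) :=
  isExactSq_of_lax (fun _ => le_rfl) fun a v h =>
    ⟨⟨(a, v.val.2), h.trans v.property⟩, le_rfl, h, le_rfl⟩

theorem isExactSq_commaMapRight (g : B ⟶ C) :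
    IsExactSq (commaMapRight g) (commaSnd (𝟙 C) g) (commaSnd (𝟙 C) (𝟙 C)) g :=
  isExactSq_of_lax (fun _ => le_rfl) fun v b h =>
    ⟨⟨(v.val.1, b), v.property.trans h⟩, ⟨le_rfl, h⟩, le_rfl⟩

end CommaMaps

section Witnesses

variable {P A B C : Preord} (p0 : P ⟶ A) (p1 : P ⟶ B) (f : A ⟶ C) (g : B ⟶ C)

def witnessObj : Preord :=
  Preord.of {v : ↥(commaObj f g) × ↥P //
    v.1.val.1 ≤ p0.hom.toFun v.2 ∧ p1.hom.toFun v.2 ≤ v.1.val.2}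

def witnessComma : witnessObj p0 p1 f g ⟶ commaObj f g :=
  Preord.ofHom ⟨fun v => v.val.1, fun _ _ h => h.1⟩

def witnessVertex : witnessObj p0 p1 f g ⟶ P :=
  Preord.ofHom ⟨fun v => v.val.2, fun _ _ h => h.2⟩

theorem isExactSq_witnessComma (hex : IsExactSq p0 p1 f g) :
    IsExactSq (witnessComma p0 p1 f g) (witnessComma p0 p1 f g) (𝟙 _) (𝟙 _) :=
  isExactSq_of_lax (fun _ => le_rfl) fun q _ h =>
    let ⟨w, hw⟩ := (hex q.val.1 q.val.2).1 q.property
    ⟨⟨(q, w), hw⟩, le_rfl, h⟩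

end Witnesses

namespace LocallyMonotone

theorem map_le_map {T : Preord ⥤ Preord} (hT : LocallyMonotone T) {X Y Z W : Preord}
    {a : X ⟶ Y} {b : Y ⟶ W} {c : X ⟶ Z} {d : Z ⟶ W}
    (h : ∀ x, b.hom.toFun (a.hom.toFun x) ≤ d.hom.toFun (c.hom.toFun x)) (ξ : ↥(T.obj X)) :
    (T.map b).hom.toFun ((T.map a).hom.toFun ξ) ≤
      (T.map d).hom.toFun ((T.map c).hom.toFun ξ) := by
  have := hT X W (a ≫ b) (c ≫ d) h ξ
  rw [T.map_comp, T.map_comp] at this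
  exact this

end LocallyMonotone

namespace PreservesStrictExactSquares

variable {T : Preord ⥤ Preord} {A B C : Preord}

theorem preservesCommaSquare_of_one_left (hs : PreservesStrictExactSquares T) {g : B ⟶ C}
    (h : PreservesCommaSquare T (𝟙 C) g) (f : A ⟶ C) : PreservesCommaSquare T f g := by
  have := (hs _ _ _ _ _ _ _ _ (fun _ => by rfl) (isExactSq_commaMapLeft f g)).paste_snd h
  simpa [PreservesCommaSquare, ← T.map_comp, commaMapLeft_comp_commaSnd] using this

theorem preservesCommaSquare_one_left_of_one_one (hs : PreservesStrictExactSquares T)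
    (h : PreservesCommaSquare T (𝟙 C) (𝟙 C)) (g : B ⟶ C) :
    PreservesCommaSquare T (𝟙 C) g := by
  have := (hs _ _ _ _ _ _ _ _ (fun _ => by rfl) (isExactSq_commaMapRight g)).paste_fst h
  simpa [PreservesCommaSquare, ← T.map_comp, commaMapRight_comp_commaFst] using this

end PreservesStrictExactSquares

namespace PreservesExactLaxSquares

variable {T : Preord ⥤ Preord}

theorem preservesStrictExactSquares (h : PreservesExactLaxSquares T) :
    PreservesStrictExactSquares T :=
  fun P A B C p0 p1 f g hs hex => h P A B C p0 p1 f g (fun w => (hs w).le) hex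

theorem preservesCommaSquare (h : PreservesExactLaxSquares T) {A B C : Preord}
    (f : A ⟶ C) (g : B ⟶ C) : PreservesCommaSquare T f g :=
  h _ _ _ _ _ _ f g (fun w => w.property) (isExactSq_comma f g)

theorem of_preservesCommaSquare (hT : LocallyMonotone T) (hs : PreservesStrictExactSquares T)
    (hc : ∀ (A B C : Preord) (f : A ⟶ C) (g : B ⟶ C), PreservesCommaSquare T f g) :
    PreservesExactLaxSquares T := by
  intro P A B C p0 p1 f g hlax hex
  refine isExactSq_of_lax (hT.map_le_map hlax) fun ξ η h => ?_
  obtain ⟨σ, hξσ, hση⟩ := (hc A B C f g ξ η).1 h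
  obtain ⟨τ, hστ, hτσ⟩ :=
    (hs _ _ _ _ _ _ _ _ (fun _ => rfl) (isExactSq_witnessComma p0 p1 f g hex) σ σ).1 le_rfl
  refine ⟨(T.map (witnessVertex p0 p1 f g)).hom.toFun τ, ?_, ?_⟩
  · calc ξ ≤ (T.map (commaFst f g)).hom.toFun σ := hξσ
      _ ≤ (T.map (commaFst f g)).hom.toFun ((T.map (witnessComma p0 p1 f g)).hom.toFun τ) :=
        (T.map _).hom.monotone hστ
      _ ≤ _ := hT.map_le_map (fun v : ↥(witnessObj p0 p1 f g) => v.property.1) τ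
  · calc _ ≤ (T.map (commaSnd f g)).hom.toFun ((T.map (witnessComma p0 p1 f g)).hom.toFun τ) :=
          hT.map_le_map (fun v : ↥(witnessObj p0 p1 f g) => v.property.2) τ
      _ ≤ (T.map (commaSnd f g)).hom.toFun σ := (T.map _).hom.monotone hτσ
      _ ≤ η := hση

end PreservesExactLaxSquares

/-- For a locally monotone functor `T : Preord ⥤ Preord` the following are
equivalent: (1) `T` preserves exact lax squares; (2) `T` preserves strict
exact squares and the exactness of the comma squares `1_A/1_A`; (3) `T`
preserves strict exact squares and the exactness of the comma squares `f/1`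
and `1/f`; (4) `T` preserves strict exact squares and the exactness of all
comma squares. -/
theorem BCC_characterization (T : Preord ⥤ Preord) (hT : LocallyMonotone T) :
    [PreservesExactLaxSquares T,
     PreservesStrictExactSquares T ∧ (∀ A : Preord, PreservesCommaSquare T (𝟙 A) (𝟙 A)),
     PreservesStrictExactSquares T ∧
       (∀ (A B : Preord) (f : A ⟶ B),
         PreservesCommaSquare T f (𝟙 B) ∧ PreservesCommaSquare T (𝟙 B) f),
     PreservesStrictExactSquares T ∧
       (∀ (A B C : Preord) (f : A ⟶ C) (g : B ⟶ C), PreservesCommaSquare T f g)].TFAE := by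
  tfae_have 1 → 2 := fun h =>
    ⟨h.preservesStrictExactSquares, fun _ => h.preservesCommaSquare _ _⟩
  tfae_have 2 → 4 := fun ⟨hs, h⟩ => ⟨hs, fun _ _ C _ g =>
    hs.preservesCommaSquare_of_one_left (hs.preservesCommaSquare_one_left_of_one_one (h C) g) _⟩
  tfae_have 4 → 1 := fun ⟨hs, h⟩ => .of_preservesCommaSquare hT hs h
  tfae_have 4 → 3 := fun ⟨hs, h⟩ => ⟨hs, fun _ _ _ => ⟨h _ _ _ _ _, h _ _ _ _ _⟩⟩
  tfae_have 3 → 2 := fun ⟨hs, h⟩ => ⟨hs, fun A => (h A A (𝟙 A)).1⟩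
  tfae_finish
end

section
/- (The powerset functor satisfies the Beck-Chevalley Condition.) Let P, A, B, C be preorders and p0 : P → A, p1 : P → B, f : A → C, g : B → C monotone maps forming an exact lax square. Then for all subsets S ⊆ A and T ⊆ B: (f '' S) ≤EM (g '' T) in C if and only if there exists W ⊆ P with S ≤EM (p0 '' W) in A and (p1 '' W) ≤EM T in B. (This says the image of the square under the powerset functor with the Egli-Milner preorder is again exact.) -/
/-!
Going down, for `f '' S ≤EM g '' T` every `a ∈ S` has some `b ∈ T` with `f a ≤ g b` and
vice versa; exactness turns each such pair into a witness `w` with `a ≤ p0 w` and `p1 w ≤ b`,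
so one takes for `W` all `w` squeezed in this way between `S` and `T`. Going up, the
Egli-Milner preorder is transitive and preserved by monotone images, and the lax square gives
`f '' (p0 '' W) ≤EM g '' (p1 '' W)` pointwise, so `f '' S ≤EM g '' T` follows by composing.
-/

def EgliMilnerLE {X : Type*} [LE X] (S T : Set X) : Prop :=
  (∀ s ∈ S, ∃ t ∈ T, s ≤ t) ∧ (∀ t ∈ T, ∃ s ∈ S, s ≤ t)

namespace EgliMilnerLE

variable {X Y ι : Type*}

theorem trans [Preorder X] {S T U : Set X} (hST : EgliMilnerLE S T) (hTU : EgliMilnerLE T U) :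
    EgliMilnerLE S U := by
  refine ⟨fun s hs => ?_, fun u hu => ?_⟩
  · obtain ⟨t, ht, hst⟩ := hST.1 s hs
    obtain ⟨u, hu, htu⟩ := hTU.1 t ht
    exact ⟨u, hu, hst.trans htu⟩
  · obtain ⟨t, ht, htu⟩ := hTU.2 u hu
    obtain ⟨s, hs, hst⟩ := hST.2 t ht
    exact ⟨s, hs, hst.trans htu⟩

theorem image [Preorder X] [Preorder Y] {f : X → Y} (hf : Monotone f) {S T : Set X}
    (h : EgliMilnerLE S T) : EgliMilnerLE (f '' S) (f '' T) := by
  refine ⟨?_, ?_⟩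
  · rintro _ ⟨s, hs, rfl⟩
    obtain ⟨t, ht, hst⟩ := h.1 s hs
    exact ⟨f t, Set.mem_image_of_mem f ht, hf hst⟩
  · rintro _ ⟨t, ht, rfl⟩
    obtain ⟨s, hs, hst⟩ := h.2 t ht
    exact ⟨f s, Set.mem_image_of_mem f hs, hf hst⟩

theorem image_image_of_le [LE X] {u v : ι → X} (huv : ∀ i, u i ≤ v i) (W : Set ι) :
    EgliMilnerLE (u '' W) (v '' W) :=
  ⟨fun _ ⟨i, hi, hu⟩ => ⟨v i, Set.mem_image_of_mem v hi, hu ▸ huv i⟩,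
    fun _ ⟨i, hi, hv⟩ => ⟨u i, Set.mem_image_of_mem u hi, hv ▸ huv i⟩⟩

end EgliMilnerLE

section LaxSquare

variable {P A B C : Type*} [Preorder A] [Preorder B] [Preorder C]
  {p0 : P → A} {p1 : P → B} {f : A → C} {g : B → C}

theorem egliMilnerLE_image_of_lax (hf : Monotone f) (hg : Monotone g)
    (lax : ∀ w, f (p0 w) ≤ g (p1 w)) {S : Set A} {T : Set B} {W : Set P}
    (hS : EgliMilnerLE S (p0 '' W)) (hT : EgliMilnerLE (p1 '' W) T) :
    EgliMilnerLE (f '' S) (g '' T) := by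
  have hfW : EgliMilnerLE (f '' (p0 '' W)) (g '' (p1 '' W)) := by
    simpa only [Set.image_image] using EgliMilnerLE.image_image_of_le lax W
  exact ((hS.image hf).trans hfW).trans (hT.image hg)

theorem exists_egliMilnerLE_of_image
    (exact : ∀ a b, f a ≤ g b → ∃ w, a ≤ p0 w ∧ p1 w ≤ b) {S : Set A} {T : Set B}
    (h : EgliMilnerLE (f '' S) (g '' T)) :
    ∃ W : Set P, EgliMilnerLE S (p0 '' W) ∧ EgliMilnerLE (p1 '' W) T := by
  refine ⟨{w | (∃ a ∈ S, a ≤ p0 w) ∧ ∃ b ∈ T, p1 w ≤ b}, ⟨?_, ?_⟩, ?_, ?_⟩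
  · intro a ha
    obtain ⟨_, ⟨b, hb, rfl⟩, hab⟩ := h.1 (f a) (Set.mem_image_of_mem f ha)
    obtain ⟨w, haw, hwb⟩ := exact a b hab
    exact ⟨p0 w, ⟨w, ⟨⟨a, ha, haw⟩, b, hb, hwb⟩, rfl⟩, haw⟩
  · rintro _ ⟨w, ⟨hwS, -⟩, rfl⟩
    exact hwS
  · rintro _ ⟨w, ⟨-, hwT⟩, rfl⟩
    exact hwT
  · intro b hb
    obtain ⟨_, ⟨a, ha, rfl⟩, hab⟩ := h.2 (g b) (Set.mem_image_of_mem g hb)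
    obtain ⟨w, haw, hwb⟩ := exact a b hab
    exact ⟨p1 w, ⟨w, ⟨⟨a, ha, haw⟩, b, hb, hwb⟩, rfl⟩, hwb⟩

end LaxSquare

theorem powerset_BCC_general {P A B C : Type*}
    [Preorder A] [Preorder B] [Preorder C]
    (p0 : P → A) (p1 : P → B) (f : A → C) (g : B → C)
    (hf : Monotone f) (hg : Monotone g)
    (lax : ∀ w : P, f (p0 w) ≤ g (p1 w))
    (exact : ∀ (a : A) (b : B), f a ≤ g b ↔ ∃ w : P, a ≤ p0 w ∧ p1 w ≤ b) :
    ∀ (S : Set A) (T : Set B),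
      ((∀ c ∈ f '' S, ∃ c' ∈ g '' T, c ≤ c') ∧ (∀ c' ∈ g '' T, ∃ c ∈ f '' S, c ≤ c')) ↔
      ∃ W : Set P,
        ((∀ a ∈ S, ∃ a' ∈ p0 '' W, a ≤ a') ∧ (∀ a' ∈ p0 '' W, ∃ a ∈ S, a ≤ a')) ∧
        ((∀ b ∈ p1 '' W, ∃ b' ∈ T, b ≤ b') ∧ (∀ b' ∈ T, ∃ b ∈ p1 '' W, b ≤ b')) :=
  fun _ _ =>
    ⟨exists_egliMilnerLE_of_image fun a b => (exact a b).mp,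
      fun ⟨_, hS, hT⟩ => egliMilnerLE_image_of_lax hf hg lax hS hT⟩

/-- (The powerset functor satisfies the Beck-Chevalley Condition.)  The image
of an exact lax square under the powerset functor, with the Egli-Milner
preorder, is again exact. -/
theorem powerset_BCC {P A B C : Type*}
    [Preorder P] [Preorder A] [Preorder B] [Preorder C]
    (p0 : P → A) (p1 : P → B) (f : A → C) (g : B → C)
    (hp0 : Monotone p0) (hp1 : Monotone p1) (hf : Monotone f) (hg : Monotone g)
    (lax : ∀ w : P, f (p0 w) ≤ g (p1 w))
    (exact : ∀ (a : A) (b : B), f a ≤ g b ↔ ∃ w : P, a ≤ p0 w ∧ p1 w ≤ b) :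
    ∀ (S : Set A) (T : Set B),
      ((∀ c ∈ f '' S, ∃ c' ∈ g '' T, c ≤ c') ∧ (∀ c' ∈ g '' T, ∃ c ∈ f '' S, c ≤ c')) ↔
      ∃ W : Set P,
        ((∀ a ∈ S, ∃ a' ∈ p0 '' W, a ≤ a') ∧ (∀ a' ∈ p0 '' W, ∃ a ∈ S, a ≤ a')) ∧
        ((∀ b ∈ p1 '' W, ∃ b' ∈ T, b ≤ b') ∧ (∀ b' ∈ T, ∃ b ∈ p1 '' W, b ≤ b')) :=
  powerset_BCC_general p0 p1 f g hf hg lax exact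
end

section
/- (The lowerset functor satisfies the Beck-Chevalley Condition.) Let P, A, B, C be preorders and p0 : P → A, p1 : P → B, f : A → C, g : B → C monotone maps forming an exact lax square. Then for every lower set V ⊆ A and every lower set W ⊆ B: (∀ a ∈ V, ∃ b ∈ W, f a ≤ g b) if and only if there exists a lower set U ⊆ P such that (∀ a ∈ V, ∃ u ∈ U, a ≤ p0 u) and (∀ u ∈ U, ∃ b ∈ W, p1 u ≤ b). -/
section LaxSquare

variable {P A B C : Type*} [Preorder A] [Preorder B] [Preorder C]
  {p0 : P → A} {p1 : P → B} {f : A → C} {g : B → C}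

theorem forall_exists_le_preimage_of_forall_exists_le
    (exact : ∀ (a : A) (b : B), f a ≤ g b → ∃ w : P, a ≤ p0 w ∧ p1 w ≤ b)
    {V : Set A} {W : Set B} (hW : IsLowerSet W) (h : ∀ a ∈ V, ∃ b ∈ W, f a ≤ g b) :
    ∀ a ∈ V, ∃ w ∈ p1 ⁻¹' W, a ≤ p0 w := by
  intro a ha
  obtain ⟨b, hb, hab⟩ := h a ha
  obtain ⟨w, haw, hwb⟩ := exact a b hab
  exact ⟨w, hW hwb hb, haw⟩

theorem forall_exists_le_of_forall_exists_le_of_lax (hf : Monotone f) (hg : Monotone g)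
    (lax : ∀ w : P, f (p0 w) ≤ g (p1 w)) {V : Set A} {W : Set B} {U : Set P}
    (hVU : ∀ a ∈ V, ∃ u ∈ U, a ≤ p0 u) (hUW : ∀ u ∈ U, ∃ b ∈ W, p1 u ≤ b) :
    ∀ a ∈ V, ∃ b ∈ W, f a ≤ g b := by
  intro a ha
  obtain ⟨u, hu, hau⟩ := hVU a ha
  obtain ⟨b, hb, hub⟩ := hUW u hu
  exact ⟨b, hb, (hf hau).trans ((lax u).trans (hg hub))⟩

end LaxSquare

theorem lowerset_BCC_general {P A B C : Type*}
    [Preorder P] [Preorder A] [Preorder B] [Preorder C]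
    (p0 : P → A) (p1 : P → B) (f : A → C) (g : B → C)
    (hp1 : Monotone p1) (hf : Monotone f) (hg : Monotone g)
    (lax : ∀ w : P, f (p0 w) ≤ g (p1 w))
    (exact : ∀ (a : A) (b : B), f a ≤ g b ↔ ∃ w : P, a ≤ p0 w ∧ p1 w ≤ b) :
    ∀ V : Set A, IsLowerSet V → ∀ W : Set B, IsLowerSet W →
      ((∀ a ∈ V, ∃ b ∈ W, f a ≤ g b) ↔
        ∃ U : Set P, IsLowerSet U ∧
          (∀ a ∈ V, ∃ u ∈ U, a ≤ p0 u) ∧ (∀ u ∈ U, ∃ b ∈ W, p1 u ≤ b)) := by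
  intro V _ W hW
  constructor
  · intro h
    exact ⟨p1 ⁻¹' W, hW.preimage hp1,
      forall_exists_le_preimage_of_forall_exists_le (fun a b => (exact a b).mp) hW h,
      fun u hu => ⟨p1 u, hu, le_rfl⟩⟩
  · rintro ⟨U, -, hVU, hUW⟩
    exact forall_exists_le_of_forall_exists_le_of_lax hf hg lax hVU hUW

/-- (The lowerset functor satisfies the Beck-Chevalley Condition.)  The image
of an exact lax square under the lowerset functor is again exact. -/
theorem lowerset_BCC {P A B C : Type*}
    [Preorder P] [Preorder A] [Preorder B] [Preorder C]
    (p0 : P → A) (p1 : P → B) (f : A → C) (g : B → C)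
    (hp0 : Monotone p0) (hp1 : Monotone p1) (hf : Monotone f) (hg : Monotone g)
    (lax : ∀ w : P, f (p0 w) ≤ g (p1 w))
    (exact : ∀ (a : A) (b : B), f a ≤ g b ↔ ∃ w : P, a ≤ p0 w ∧ p1 w ≤ b) :
    ∀ V : Set A, IsLowerSet V → ∀ W : Set B, IsLowerSet W →
      ((∀ a ∈ V, ∃ b ∈ W, f a ≤ g b) ↔
        ∃ U : Set P, IsLowerSet U ∧
          (∀ a ∈ V, ∃ u ∈ U, a ≤ p0 u) ∧ (∀ u ∈ U, ∃ b ∈ W, p1 u ≤ b)) :=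
  lowerset_BCC_general p0 p1 f g hp1 hf hg lax exact
end
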